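/- arXiv:1909.03188 — 5 statements merged into one kernel-verified Lean document; each statement's English description precedes it below -/
import Mathlib

section
/- Let C be any category. The assignment sending each object X of C to the collection of all universal colim sieves on X is a Grothendieck topology on C. That is: (1) for every X the maximal sieve (the full overcategory of X) is a universal colim sieve on X; (2) if S is a universal colim sieve on X and f : Y → X is any morphism, then the pullback sieve f*S is a universal colim sieve on Y; (3) if S is a universal colim sieve on X and R is any sieve on X such that f*R is a universal colim sieve on the domain of f for every f ∈ S, then R is a universal colim sieve on X. -/
open CategoryTheory Limits

universe v u

namespace UCSTopology

variable {C : Type u} [Category.{v} C]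

/-- A sieve `S` on `X` is a *colim sieve* if the colimit of the forgetful diagram
`U : S → C` exists and the canonical map `colim U → X` is an isomorphism, i.e. the
canonical cocone on the diagram of the sieve with vertex `X` is a colimit cocone. -/
def ColimSieve {X : C} (S : Sieve X) : Prop :=
  Nonempty (IsColimit (S : Presieve X).cocone)

/-- A sieve `S` on `X` is a *universal colim sieve* if for every morphism `f : Y ⟶ X`
the pullback sieve `f*S` is a colim sieve on `Y`. -/
def UniversalColimSieve {X : C} (S : Sieve X) : Prop :=
  ∀ ⦃Y : C⦄ (f : Y ⟶ X), ColimSieve (S.pullback f)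

lemma universalColimSieve_iff {X : C} (S : Sieve X) :
    UniversalColimSieve S ↔
      ∀ W : C, S ∈ (Sheaf.finestTopologySingle (yoneda.obj W)) X := by
  constructor
  · intro h W Y f
    exact (Sieve.forallYonedaIsSheaf_iff_colimit (S.pullback f)).mpr (h f) W
  · intro h Y f
    exact (Sieve.forallYonedaIsSheaf_iff_colimit (S.pullback f)).mp
      (fun W => h W Y f)

/-- **Theorem (universal colim sieves form a Grothendieck topology).**
For any category `C`: (1) the maximal sieve on every object is a universal colim sieve;
(2) universal colim sieves are stable under pullback; and (3) if `S` is a universal colim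
sieve on `X` and `R` is a sieve on `X` such that `f*R` is a universal colim sieve for
every `f ∈ S`, then `R` is a universal colim sieve on `X`. -/
theorem universalColimSieves_form_grothendieckTopology :
    (∀ X : C, UniversalColimSieve (⊤ : Sieve X)) ∧
    (∀ ⦃X Y : C⦄ (f : Y ⟶ X) (S : Sieve X),
      UniversalColimSieve S → UniversalColimSieve (S.pullback f)) ∧
    (∀ ⦃X : C⦄ (S R : Sieve X), UniversalColimSieve S →
      (∀ ⦃Y : C⦄ (f : Y ⟶ X), S.arrows f → UniversalColimSieve (R.pullback f)) →
      UniversalColimSieve R) := by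
  refine ⟨?_, ?_, ?_⟩
  · intro X
    rw [universalColimSieve_iff]
    exact fun W => (Sheaf.finestTopologySingle (yoneda.obj W)).top_mem X
  · intro X Y f S hS
    rw [universalColimSieve_iff] at hS ⊢
    exact fun W => (Sheaf.finestTopologySingle (yoneda.obj W)).pullback_stable f (hS W)
  · intro X S R hS hR
    rw [universalColimSieve_iff] at hS ⊢
    intro W
    refine (Sheaf.finestTopologySingle (yoneda.obj W)).transitive (hS W) R ?_
    intro Y f hf
    exact (universalColimSieve_iff _).mp (hR f hf) W

end UCSTopology
end

section
/- For any locally small category C, the canonical Grothendieck topology on C (the largest Grothendieck topology in which every representable presheaf is a sheaf) coincides with the Grothendieck topology of universal colim sieves: a sieve S on an object X is a covering sieve for the canonical topology if and only if S is a universal colim sieve on X. -/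
open CategoryTheory Limits

universe v u

namespace UCSTopology

variable {C : Type u} [Category.{v} C]

/-- **Theorem (the canonical topology consists of the universal colim sieves).**
For any (locally small) category `C`, a sieve `S` on an object `X` is a covering sieve
for the canonical topology (the largest Grothendieck topology in which every
representable presheaf is a sheaf) if and only if `S` is a universal colim sieve. -/
theorem mem_canonicalTopology_iff_universalColimSieve {X : C} (S : Sieve X) :
    S ∈ Sheaf.canonicalTopology C X ↔ UniversalColimSieve S := by
  rw [Sheaf.canonicalTopology, Sheaf.finestTopology,
    GrothendieckTopology.mem_sInf]
  constructor
  · intro h Y f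
    rw [ColimSieve, ← Sieve.forallYonedaIsSheaf_iff_colimit]
    intro W
    exact h (Sheaf.finestTopologySingle (yoneda.obj W)) ⟨_, ⟨W, rfl⟩, rfl⟩ Y f
  · rintro h t ⟨_, ⟨W, rfl⟩, rfl⟩ Y f
    exact (Sieve.forallYonedaIsSheaf_iff_colimit (S.pullback f)).mpr (h f) W

end UCSTopology
end

section
/- Let C be a cocomplete category and let S = ⟨{f_α : A_α → X}_{α∈𝔄}⟩ be the sieve on X generated by a family of morphisms such that the pullback A_i ×_X A_j exists for all i, j ∈ 𝔄. Then the colimit of the forgetful diagram U : S → C is isomorphic to the coequalizer of the two morphisms ∐_{(i,j)∈𝔄×𝔄} A_i ×_X A_j ⇉ ∐_{k∈𝔄} A_k induced by the first and second pullback projections A_i ×_X A_j → A_i and A_i ×_X A_j → A_j. -/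
open CategoryTheory Limits

universe v u

namespace UCSTopology

variable {C : Type u} [Category.{v} C]

section Aux

variable [HasColimits C] {ι : Type v} {X : C} (A : ι → C) (f : ∀ i, A i ⟶ X)
  [∀ i j, HasPullback (f i) (f j)]

/-- The left leg of the coequalizer diagram. -/
noncomputable abbrev lmap : (∐ fun p : ι × ι => pullback (f p.1) (f p.2)) ⟶ ∐ A :=
  Sigma.desc fun p : ι × ι => pullback.fst (f p.1) (f p.2) ≫ Sigma.ι A p.1

/-- The right leg of the coequalizer diagram. -/
noncomputable abbrev rmap : (∐ fun p : ι × ι => pullback (f p.1) (f p.2)) ⟶ ∐ A :=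
  Sigma.desc fun p : ι × ι => pullback.snd (f p.1) (f p.2) ≫ Sigma.ι A p.2

/-- Structure maps into the coequalizer. -/
noncomputable abbrev qπ (i : ι) : A i ⟶ coequalizer (lmap A f) (rmap A f) :=
  Sigma.ι A i ≫ coequalizer.π _ _

lemma key {Y : C} {i j : ι} (h₁ : Y ⟶ A i) (h₂ : Y ⟶ A j) (w : h₁ ≫ f i = h₂ ≫ f j) :
    h₁ ≫ qπ A f i = h₂ ≫ qπ A f j := by
  have c := coequalizer.condition (lmap A f) (rmap A f)
  have e := Limits.Sigma.ι (fun p : ι × ι => pullback (f p.1) (f p.2)) (i, j) ≫= c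
  simp only [← Category.assoc, Limits.Sigma.ι_desc] at e
  have := pullback.lift h₁ h₂ w ≫= e
  simp only [← Category.assoc, pullback.lift_fst, pullback.lift_snd] at this
  simpa using this

lemma exFac (Z : (Sieve.generate (Presieve.ofArrows A f) : Presieve X).category) :
    ∃ i, ∃ h : Z.obj.left ⟶ A i, h ≫ f i = Z.obj.hom := by
  obtain ⟨Y, h, g, hg, w⟩ := Z.property
  cases hg with
  | mk i => exact ⟨i, h, w⟩

/-- The cocone over the sieve diagram with cone point the coequalizer. -/
noncomputable def myCocone :
    Cocone ((Sieve.generate (Presieve.ofArrows A f) : Presieve X).diagram) where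
  pt := coequalizer (lmap A f) (rmap A f)
  ι :=
    { app := fun Z => (exFac A f Z).choose_spec.choose ≫ qπ A f (exFac A f Z).choose
      naturality := fun Z Z' e => by
        dsimp
        rw [Category.comp_id, ← Category.assoc]
        exact (key A f _ _ (by
          rw [Category.assoc, (exFac A f Z').choose_spec.choose_spec,
            (exFac A f Z).choose_spec.choose_spec]
          exact (Over.w e.hom).symm)).symm }

/-- The object of the sieve category given by `f i`. -/
def objA (i : ι) : (Sieve.generate (Presieve.ofArrows A f) : Presieve X).category :=
  Presieve.categoryMk _ (f i) ⟨A i, 𝟙 _, f i, Presieve.ofArrows.mk i, by simp⟩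

/-- The cocone `myCocone` is a colimit cocone. -/
noncomputable def myIsColimit : IsColimit (myCocone A f) := by
  refine
    { desc := fun s => coequalizer.desc (Limits.Sigma.desc fun i => s.ι.app (objA A f i)) ?_
      fac := fun s Z => ?_
      uniq := fun s m hm => ?_ }
  · apply Limits.Sigma.hom_ext
    rintro ⟨i, j⟩
    simp only [← Category.assoc, Limits.Sigma.ι_desc]
    simp only [Category.assoc, Limits.Sigma.ι_desc]
    let ZP : (Sieve.generate (Presieve.ofArrows A f) : Presieve X).category :=
      Presieve.categoryMk _ (pullback.fst (f i) (f j) ≫ f i)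
        ⟨A i, pullback.fst (f i) (f j), f i, Presieve.ofArrows.mk i, rfl⟩
    have h₁ :=
      s.ι.naturality (show ZP ⟶ objA A f i from ObjectProperty.homMk (Over.homMk (pullback.fst (f i) (f j)) rfl))
    have h₂ :=
      s.ι.naturality (show ZP ⟶ objA A f j from
        ObjectProperty.homMk (Over.homMk (pullback.snd (f i) (f j)) (pullback.condition (f := f i) (g := f j)).symm))
    simp only [Functor.const_obj_map, Category.comp_id] at h₁ h₂
    dsimp at h₁ h₂ ⊢
    erw [Limits.Sigma.ι_desc, Limits.Sigma.ι_desc]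
    exact h₁.trans h₂.symm
  · -- fac
    dsimp [myCocone]
    rw [Category.assoc, Category.assoc, coequalizer.π_desc]
    erw [Limits.Sigma.ι_desc]
    have h₁ :=
      s.ι.naturality (show Z ⟶ objA A f (exFac A f Z).choose from
        ObjectProperty.homMk (Over.homMk (exFac A f Z).choose_spec.choose
          (by exact (exFac A f Z).choose_spec.choose_spec)))
    exact h₁.trans (Category.comp_id _)
  · -- uniq
    apply coequalizer.hom_ext
    apply Limits.Sigma.hom_ext
    intro i
    simp only [Category.assoc, coequalizer.π_desc, Limits.Sigma.ι_desc]
    have h₁ := hm (objA A f i)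
    have h₂ : (myCocone A f).ι.app (objA A f i) = qπ A f i := by
      dsimp [myCocone]
      have := key A f (exFac A f (objA A f i)).choose_spec.choose (𝟙 (A i))
        ((exFac A f (objA A f i)).choose_spec.choose_spec.trans (Category.id_comp _).symm)
      exact this.trans (Category.id_comp _)
    rw [h₂] at h₁
    erw [Limits.Sigma.ι_desc]
    exact (Category.assoc _ _ _).symm.trans h₁

end Aux

/-- **Proposition (the colimit over a generated sieve is a coequalizer).**
Let `C` be a cocomplete category and `S = ⟨{fᵢ : Aᵢ ⟶ X}⟩` the sieve generated by a
family of morphisms such that all the pullbacks `Aᵢ ×_X Aⱼ` exist.  Then the colimit of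
the forgetful diagram `U : S ⥤ C` exists and is isomorphic to the coequalizer of the two
morphisms `∐_{(i,j)} Aᵢ ×_X Aⱼ ⇉ ∐_k A_k` induced by the two pullback projections. -/
theorem colimit_generate_iso_coequalizer [HasColimits C]
    {ι : Type v} {X : C} (A : ι → C) (f : ∀ i, A i ⟶ X)
    [∀ i j, HasPullback (f i) (f j)] :
    ∃ h : HasColimit ((Sieve.generate (Presieve.ofArrows A f) : Presieve X).diagram),
      Nonempty
        (@colimit _ _ _ _ ((Sieve.generate (Presieve.ofArrows A f) : Presieve X).diagram) h ≅
          coequalizer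
            (Sigma.desc fun p : ι × ι => pullback.fst (f p.1) (f p.2) ≫ Sigma.ι A p.1)
            (Sigma.desc fun p : ι × ι => pullback.snd (f p.1) (f p.2) ≫ Sigma.ι A p.2)) := by
  have h : HasColimit ((Sieve.generate (Presieve.ofArrows A f) : Presieve X).diagram) :=
    ⟨⟨⟨myCocone A f, myIsColimit A f⟩⟩⟩
  exact ⟨h, ⟨@colimit.isoColimitCocone _ _ _ _ _ h ⟨myCocone A f, myIsColimit A f⟩⟩⟩

end UCSTopology
end

section
/- Let C be a cocomplete category with all pullbacks and let f : Y → X be a morphism. Then the sieve S = ⟨{f}⟩ on X generated by f is a colim sieve if and only if f is an effective epimorphism; moreover S is a universal colim sieve if and only if f is a universal effective epimorphism. -/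
open CategoryTheory Limits

universe v u

namespace UCSTopology

variable {C : Type u} [Category.{v} C]

/-- A morphism `f : A ⟶ B` is an *effective epimorphism* if the pullback `A ×_B A`
exists and the canonical map from the coequalizer of the two pullback projections
`A ×_B A ⇉ A` to `B` is an isomorphism. -/
def IsEffectiveEpi {A B : C} (f : A ⟶ B) : Prop :=
  ∃ (P : C) (p₁ p₂ : P ⟶ A) (h : IsPullback p₁ p₂ f f),
    Nonempty (IsColimit (Cofork.ofπ f h.w))

/-- A morphism `f : A ⟶ B` is a *universal effective epimorphism* if it is an effective
epimorphism and every pullback of `f` along a morphism `D ⟶ B` is an effective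
epimorphism. -/
def IsUniversalEffectiveEpi {A B : C} (f : A ⟶ B) : Prop :=
  IsEffectiveEpi f ∧
    ∀ ⦃D P : C⦄ (g : D ⟶ B) (p₁ : P ⟶ A) (p₂ : P ⟶ D),
      IsPullback p₁ p₂ f g → IsEffectiveEpi p₂


lemma effectiveEpi_comp_iso' {P P' D : C} (e : P' ⟶ P) [IsIso e] (q : P ⟶ D)
    [EffectiveEpi q] : EffectiveEpi (e ≫ q) := by
  refine ⟨⟨⟨fun ε hε => EffectiveEpi.desc q (inv e ≫ ε) (fun g₁ g₂ hg => ?_),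
    fun ε hε => ?_, fun ε hε m hm => ?_⟩⟩⟩
  · have := hε (g₁ ≫ inv e) (g₂ ≫ inv e) (by simp [hg])
    simpa using this
  · have := EffectiveEpi.fac q (inv e ≫ ε) (fun g₁ g₂ hg => by
      have := hε (g₁ ≫ inv e) (g₂ ≫ inv e) (by simp [hg]); simpa using this)
    simp only [Category.assoc, this]
    simp
  · apply EffectiveEpi.uniq q (inv e ≫ ε)
    rw [← hm]; simp

noncomputable def coforkIsColimitOfEffectiveEpi {A B P : C} {f : A ⟶ B} {p₁ p₂ : P ⟶ A}
    (h : IsPullback p₁ p₂ f f) [EffectiveEpi f] : IsColimit (Cofork.ofπ f h.w) :=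
  Cofork.IsColimit.mk _
    (fun s => EffectiveEpi.desc f s.π (fun g₁ g₂ hg => by
      have h1 : h.lift g₁ g₂ hg ≫ p₁ = g₁ := h.lift_fst g₁ g₂ hg
      have h2 : h.lift g₁ g₂ hg ≫ p₂ = g₂ := h.lift_snd g₁ g₂ hg
      calc g₁ ≫ s.π = h.lift g₁ g₂ hg ≫ p₁ ≫ s.π := by rw [← Category.assoc, h1]
        _ = h.lift g₁ g₂ hg ≫ p₂ ≫ s.π := by rw [s.condition]
        _ = g₂ ≫ s.π := by rw [← Category.assoc, h2]))
    (fun s => by simpa using EffectiveEpi.fac f s.π _)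
    (fun s m hm => EffectiveEpi.uniq f s.π _ m (by simpa using hm))

lemma isEffectiveEpi_iff_effectiveEpi [HasPullbacks C] {A B : C} (f : A ⟶ B) :
    IsEffectiveEpi f ↔ EffectiveEpi f := by
  constructor
  · rintro ⟨P, p₁, p₂, h, ⟨hc⟩⟩
    exact ⟨⟨⟨fun _ h' => Cofork.IsColimit.desc hc _ (h' _ _ h.w),
      fun _ _ => Cofork.IsColimit.π_desc' hc _ _,
      fun _ _ _ hg => Cofork.IsColimit.hom_ext hc
        (hg.trans (Cofork.IsColimit.π_desc' hc _ _).symm)⟩⟩⟩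
  · intro hE
    exact ⟨pullback f f, pullback.fst f f, pullback.snd f f, IsPullback.of_hasPullback f f,
      ⟨coforkIsColimitOfEffectiveEpi (IsPullback.of_hasPullback f f)⟩⟩

lemma pullback_generate_singleton [HasPullbacks C] {Y X Z : C} (f : Y ⟶ X) (g : Z ⟶ X) :
    (Sieve.generate (Presieve.singleton f)).pullback g =
      Sieve.generate (Presieve.singleton (pullback.snd f g)) := by
  rw [Sieve.generateSingleton_eq, Sieve.generateSingleton_eq]
  ext W h
  simp only [Sieve.pullback_apply]
  constructor
  · rintro ⟨t, ht⟩
    exact ⟨pullback.lift t h ht, pullback.lift_snd _ _ _⟩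
  · rintro ⟨t, ht⟩
    exact ⟨t ≫ pullback.fst f g, by
      rw [Category.assoc, pullback.condition, ← Category.assoc, ht]⟩

lemma colimSieve_iff_effectiveEpimorphic {X : C} (S : Sieve X) :
    ColimSieve S ↔ S.EffectiveEpimorphic := Iff.rfl

/-- **Corollary (monogenic colim sieves are generated by effective epimorphisms).**
Let `C` be a cocomplete category with pullbacks and `f : Y ⟶ X`.  The sieve `⟨{f}⟩`
generated by `f` is a colim sieve if and only if `f` is an effective epimorphism, and
it is a universal colim sieve if and only if `f` is a universal effective epimorphism. -/
theorem generateSingleton_colimSieve_iff_effectiveEpi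
    [HasColimits C] [HasPullbacks C] {Y X : C} (f : Y ⟶ X) :
    (ColimSieve (Sieve.generate (Presieve.singleton f)) ↔ IsEffectiveEpi f) ∧
    (UniversalColimSieve (Sieve.generate (Presieve.singleton f)) ↔
      IsUniversalEffectiveEpi f) := by
  have key : ∀ {A B : C} (q : A ⟶ B),
      ColimSieve (Sieve.generate (Presieve.singleton q)) ↔ IsEffectiveEpi q := by
    intro A B q
    rw [colimSieve_iff_effectiveEpimorphic, isEffectiveEpi_iff_effectiveEpi]
    exact Sieve.effectiveEpimorphic_singleton q
  refine ⟨key f, ?_⟩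
  constructor
  · intro hU
    constructor
    · have := hU (𝟙 X)
      rw [Sieve.pullback_id] at this
      exact (key f).mp this
    · intro D P g p₁ p₂ hpb
      have := hU g
      rw [pullback_generate_singleton] at this
      have h1 : EffectiveEpi (pullback.snd f g) :=
        (isEffectiveEpi_iff_effectiveEpi _).mp ((key _).mp this)
      have h2 : EffectiveEpi p₂ := by
        rw [← hpb.isoPullback_hom_snd]
        exact effectiveEpi_comp_iso' _ _
      exact (isEffectiveEpi_iff_effectiveEpi _).mpr h2
  · rintro ⟨h₁, h₂⟩ Z g
    rw [pullback_generate_singleton]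
    exact (key _).mpr (h₂ g (pullback.fst f g) (pullback.snd f g) (IsPullback.of_hasPullback f g))


end UCSTopology
end

section
/- Let A be a category, G : A → Cat a functor, Gr(G) the Grothendieck construction of G with projection functor p : Gr(G) → A sending (a, τ) to a, and let σ : Gr(G) → C and θ : A → C be functors equipped with a natural transformation η : σ → θ ∘ p. Suppose that for every object a of A, the cocone on the diagram σ(a, −) : G(a) → C with vertex θ(a) and legs η_{(a,τ)} is a colimit cocone. Then for every object Y of C, the assignment sending a cocone under θ with vertex Y, given by legs (χ_a : θ(a) → Y)_{a∈A}, to the cocone under σ with vertex Y given by legs (χ_a ∘ η_{(a,τ)} : σ(a,τ) → Y)_{(a,τ)∈Gr(G)}, is a bijection between cocones under θ with vertex Y and cocones under σ with vertex Y. -/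
open CategoryTheory Limits

universe w₁ w₂ v₁ v₂ u₁ u₂

namespace UCSTopology

variable {A : Type u₁} [Category.{v₁} A] {M : Type u₂} [Category.{v₂} M]
variable (G : A ⥤ Cat.{w₁, w₂})

/-- For functors `σ : Gr(G) ⥤ M` and `θ : A ⥤ M` and a natural transformation
`η : σ ⟶ p ⋙ θ` (where `p : Gr(G) ⥤ A` is the projection of the Grothendieck
construction), the cocone on the fiber diagram `σ(a, −) : G(a) ⥤ M` with vertex `θ(a)`
whose legs are the components `η_{(a,τ)}`. -/
@[simps]
def fiberCocone (σ : Grothendieck G ⥤ M) (θ : A ⥤ M)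
    (η : σ ⟶ Grothendieck.forget G ⋙ θ) (a : A) :
    Cocone (Grothendieck.ι G a ⋙ σ) where
  pt := θ.obj a
  ι :=
    { app := fun τ => η.app ((Grothendieck.ι G a).obj τ)
      naturality := by
        intro τ τ' g
        have h := η.naturality ((Grothendieck.ι G a).map g)
        have hb : (Grothendieck.forget G ⋙ θ).map ((Grothendieck.ι G a).map g) = 𝟙 _ :=
          θ.map_id a
        exact h.trans (by rw [hb]; try rfl) }

/-- The assignment sending a cocone under `θ` with vertex `Y` (viewed as a natural
transformation `χ : θ ⟶ const Y`) to the cocone under `σ` with vertex `Y` whose leg at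
`(a, τ)` is `η_{(a,τ)} ≫ χ_a`. -/
@[simps]
def inducedCocone (σ : Grothendieck G ⥤ M) (θ : A ⥤ M)
    (η : σ ⟶ Grothendieck.forget G ⋙ θ) (Y : M)
    (χ : θ ⟶ (Functor.const A).obj Y) :
    σ ⟶ (Functor.const (Grothendieck G)).obj Y where
  app p := η.app p ≫ χ.app p.base
  naturality p q m := by
    have h₁ := η.naturality m
    have hb : (Grothendieck.forget G).map m = m.base := rfl
    have h₂ := χ.naturality m.base
    simp only [Functor.comp_map, Functor.const_obj_map, Category.comp_id] at h₁ h₂ ⊢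
    calc σ.map m ≫ η.app q ≫ χ.app q.base
        = (σ.map m ≫ η.app q) ≫ χ.app q.base := (Category.assoc _ _ _).symm
      _ = (η.app p ≫ θ.map m.base) ≫ χ.app q.base := by rw [h₁]; try rfl
      _ = η.app p ≫ (θ.map m.base ≫ χ.app q.base) := Category.assoc _ _ _
      _ = (η.app p ≫ χ.app p.base) ≫ 𝟙 Y :=
        (congrArg (fun x => η.app p ≫ x) h₂).trans (Category.assoc _ _ _).symm

/-- **Proposition (cocones under a Grothendieck construction).**
Let `G : A ⥤ Cat`, let `p : Gr(G) ⥤ A` be the projection of the Grothendieck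
construction, let `σ : Gr(G) ⥤ M`, `θ : A ⥤ M` be functors and `η : σ ⟶ p ⋙ θ` a natural
transformation.  If for every object `a` of `A` the cocone on `σ(a, −) : G(a) ⥤ M` with
vertex `θ(a)` and legs `η_{(a,τ)}` is a colimit cocone, then for every object `Y` of `M`
the assignment sending a cocone `(χ_a : θ(a) ⟶ Y)_a` under `θ` with vertex `Y` to the
cocone `(η_{(a,τ)} ≫ χ_a)_{(a,τ)}` under `σ` with vertex `Y` is a bijection. -/
theorem bijective_inducedCocone (σ : Grothendieck G ⥤ M) (θ : A ⥤ M)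
    (η : σ ⟶ Grothendieck.forget G ⋙ θ)
    (hcolim : ∀ a : A, Nonempty (IsColimit (fiberCocone G σ θ η a))) (Y : M) :
    Function.Bijective (inducedCocone G σ θ η Y) := by
  constructor
  · intro χ χ' h
    ext a
    refine (hcolim a).some.hom_ext fun τ => ?_
    have := congrArg (fun ν : σ ⟶ (Functor.const (Grothendieck G)).obj Y =>
      ν.app ((Grothendieck.ι G a).obj τ)) h
    exact this
  · intro ψ
    -- for each `a`, a cocone on the fiber diagram with vertex `Y`
    let c : ∀ a : A, Cocone (Grothendieck.ι G a ⋙ σ) := fun a =>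
      { pt := Y
        ι :=
          { app := fun τ => ψ.app ((Grothendieck.ι G a).obj τ)
            naturality := fun τ τ' g => by
              have := ψ.naturality ((Grothendieck.ι G a).map g)
              exact this } }
    have fac : ∀ (a : A) (τ : G.obj a),
        η.app ((Grothendieck.ι G a).obj τ) ≫ (hcolim a).some.desc (c a) =
          ψ.app ((Grothendieck.ι G a).obj τ) := fun a τ => (hcolim a).some.fac (c a) τ
    refine ⟨{ app := fun a => (hcolim a).some.desc (c a), naturality := ?_ }, ?_⟩
    · intro a b f
      refine (hcolim a).some.hom_ext fun τ => ?_
      have key : η.app ((Grothendieck.ι G a).obj τ) ≫ θ.map f ≫ (hcolim b).some.desc (c b) =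
          ψ.app ((Grothendieck.ι G a).obj τ) := by
        let m : (Grothendieck.ι G a).obj τ ⟶ (Grothendieck.ι G b).obj ((G.map f).toFunctor.obj τ) :=
          ⟨f, 𝟙 _⟩
        have h₁ := η.naturality m
        have hb : (Grothendieck.forget G).map m = f := rfl
        simp only [Functor.comp_map, hb] at h₁
        refine (Category.assoc _ _ _).symm.trans ((congrArg (fun x => x ≫ (hcolim b).some.desc (c b)) h₁.symm).trans ((Category.assoc _ _ _).trans ((congrArg (fun x => σ.map m ≫ x) (fac b _)).trans ?_)))
        have := ψ.naturality m
        simpa using this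
      simp only [fiberCocone_ι_app, Functor.const_obj_map, Category.comp_id]
      refine key.trans ?_
      show ψ.app _ = _ ≫ _ ≫ 𝟙 Y
      rw [Category.comp_id]
      exact (fac a τ).symm
    · ext p
      cases p
      exact fac _ _

end UCSTopology
end
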